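/- Suppose the fixed-point problem v = Tv with Tf(x) = β log E^Q[e^{f(X_{t+1}) + αu(X_t,X_{t+1})}|X_t = x] has a solution v₀ ∈ E^{φ_r}(Q₀) for parameters (α₀, β₀), and let there exist, for each θ > 0 with associated α(θ) = −1/(θ(1−β₀)), a unique solution v_{(α₀−α(θ), β₀)} ∈ E^{φ_r} to the recursion with composite parameter α₀ − α(θ) under Q. Define the alternative kernel Q_θ by dQ_θ(x'|x)/dQ(x'|x) = exp(v_{(α₀−α(θ),β₀)}(x') + (α₀ − α(θ))u(x,x') − β₀^{−1} v_{(α₀−α(θ),β₀)}(x)). Then: (i) v₀ − v_{(α₀−α(θ),β₀)} is the unique solution in E^{φ_r} to the value recursion under Q_θ with parameter α(θ); and (ii) the worst-case change of measure induced by (Q_θ, α(θ)), composed with dQ_θ/dQ, equals exp(v₀(X_{t+1}) + α₀u(X_t,X_{t+1}) − β₀^{−1}v₀(X_t)), the worst-case change of measure induced by (Q, α₀). Hence the two benchmark-model/preference pairs induce identical worst-case models and are observationally equivalent. -/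
import Mathlib

open MeasureTheory
open scoped NNReal ENNReal

/-- Membership in the Orlicz heart `E^{φ_r}(Q₀)`. -/
def InHeart {X : Type*} [MeasurableSpace X] (Q₀ : Measure X) (r : ℝ) (f : X → ℝ) : Prop :=
  Measurable f ∧ ∀ c > 0, ∫⁻ x, ENNReal.ofReal (Real.exp ((|f x| / c) ^ r)) ∂Q₀ < ⊤

lemma heart_bound {X : Type*} [MeasurableSpace X] {Q₀ : Measure X} {r : ℝ} (hr : 1 < r)
    {f g h : X → ℝ} (hf : InHeart Q₀ r f) (hg : InHeart Q₀ r g)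
    (hm : Measurable h) (hb : ∀ x, |h x| ≤ |f x| + |g x|) : InHeart Q₀ r h := by
  refine ⟨hm, fun c hc => ?_⟩
  have hr0 : (0:ℝ) ≤ r := by linarith
  have hc2 : (0:ℝ) < c / 2 := by linarith
  have key : ∀ x, ENNReal.ofReal (Real.exp ((|h x| / c) ^ r)) ≤
      ENNReal.ofReal (Real.exp ((|f x| / (c/2)) ^ r)) +
      ENNReal.ofReal (Real.exp ((|g x| / (c/2)) ^ r)) := by
    intro x
    have hdn : 0 ≤ |h x| / c := div_nonneg (abs_nonneg _) hc.le
    rcases le_total (|f x|) (|g x|) with hle | hle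
    · have h1 : |h x| / c ≤ |g x| / (c/2) := by
        rw [div_le_div_iff₀ hc hc2]
        nlinarith [hb x, abs_nonneg (f x), abs_nonneg (g x)]
      have h2 : (|h x| / c) ^ r ≤ (|g x| / (c/2)) ^ r :=
        Real.rpow_le_rpow hdn h1 hr0
      calc ENNReal.ofReal (Real.exp ((|h x| / c) ^ r))
          ≤ ENNReal.ofReal (Real.exp ((|g x| / (c/2)) ^ r)) :=
            ENNReal.ofReal_le_ofReal (Real.exp_le_exp.2 h2)
        _ ≤ _ := le_add_self
    · have h1 : |h x| / c ≤ |f x| / (c/2) := by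
        rw [div_le_div_iff₀ hc hc2]
        nlinarith [hb x, abs_nonneg (f x), abs_nonneg (g x)]
      have h2 : (|h x| / c) ^ r ≤ (|f x| / (c/2)) ^ r :=
        Real.rpow_le_rpow hdn h1 hr0
      calc ENNReal.ofReal (Real.exp ((|h x| / c) ^ r))
          ≤ ENNReal.ofReal (Real.exp ((|f x| / (c/2)) ^ r)) :=
            ENNReal.ofReal_le_ofReal (Real.exp_le_exp.2 h2)
        _ ≤ _ := self_le_add_right _ _
  have hmeasf : Measurable fun x => ENNReal.ofReal (Real.exp ((|f x| / (c/2)) ^ r)) :=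
    ENNReal.measurable_ofReal.comp (Real.measurable_exp.comp
      ((Real.continuous_rpow_const hr0).measurable.comp (hf.1.abs.div_const _)))
  calc ∫⁻ x, ENNReal.ofReal (Real.exp ((|h x| / c) ^ r)) ∂Q₀
      ≤ ∫⁻ x, (ENNReal.ofReal (Real.exp ((|f x| / (c/2)) ^ r)) +
          ENNReal.ofReal (Real.exp ((|g x| / (c/2)) ^ r))) ∂Q₀ := lintegral_mono key
    _ = (∫⁻ x, ENNReal.ofReal (Real.exp ((|f x| / (c/2)) ^ r)) ∂Q₀) +
        ∫⁻ x, ENNReal.ofReal (Real.exp ((|g x| / (c/2)) ^ r)) ∂Q₀ :=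
          lintegral_add_left hmeasf _
    _ < ⊤ := ENNReal.add_lt_top.2 ⟨hf.2 _ hc2, hg.2 _ hc2⟩

/-- Generic underidentification of the benchmark model and the risk-sensitivity
parameter. Given the unique solution `v₀ ∈ E^{φ_r}` of the value recursion under `(Q, α₀)`
and, for each `θ > 0` with `α(θ) = −1/(θ(1−β₀))`, the unique solution `vθ ∈ E^{φ_r}`
of the recursion with composite parameter `α₀ − α(θ)` under `Q`, define the alternative
kernel `Q_θ` with density `exp(vθ(x') + (α₀−α(θ))u(x,x') − vθ(x)/β₀)` against `Q`. Then:
(i) `v₀ − vθ` is the unique solution in `E^{φ_r}` of the value recursion under `Q_θ`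
with parameter `α(θ)`; and (ii) the worst-case change of measure induced by
`(Q_θ, α(θ))`, composed with `dQ_θ/dQ`, equals the worst-case change of measure
`exp(v₀(x') + α₀u(x,x') − v₀(x)/β₀)` induced by `(Q, α₀)` — so the two
benchmark/preference pairs are observationally equivalent. -/
theorem stmt19 {X : Type*} [MeasurableSpace X]
    (Q : X → Measure X) (hQ : ∀ x, IsProbabilityMeasure (Q x))
    (Q₀ : Measure X) [IsProbabilityMeasure Q₀]
    (u : X → X → ℝ) (hu : Measurable (Function.uncurry u))
    (r α₀ β₀ : ℝ) (hr : 1 < r) (hβ₀ : β₀ ∈ Set.Ioo (0 : ℝ) 1)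
    (v₀ : X → ℝ) (hv₀heart : InHeart Q₀ r v₀)
    (hv₀int : ∀ x, Integrable (fun y => Real.exp (v₀ y + α₀ * u x y)) (Q x))
    (hv₀ : ∀ x, v₀ x = β₀ * Real.log (∫ y, Real.exp (v₀ y + α₀ * u x y) ∂(Q x)))
    -- v₀ is the unique solution in the Orlicz heart under (Q, α₀)
    (huniq : ∀ w : X → ℝ, InHeart Q₀ r w →
      (∀ x, Integrable (fun y => Real.exp (w y + α₀ * u x y)) (Q x)) →
      (∀ x, w x = β₀ * Real.log (∫ y, Real.exp (w y + α₀ * u x y) ∂(Q x))) → w = v₀)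
    (vθ : ℝ → X → ℝ)
    (hvθheart : ∀ θ > (0 : ℝ), InHeart Q₀ r (vθ θ))
    (hvθint : ∀ θ > (0 : ℝ), ∀ x, Integrable
      (fun y => Real.exp (vθ θ y + (α₀ - (-(1 / (θ * (1 - β₀))))) * u x y)) (Q x))
    (hvθ : ∀ θ > (0 : ℝ), ∀ x, vθ θ x = β₀ * Real.log
      (∫ y, Real.exp (vθ θ y + (α₀ - (-(1 / (θ * (1 - β₀))))) * u x y) ∂(Q x)))
    (Qθ : ℝ → X → Measure X)
    (hQθ : ∀ θ > (0 : ℝ), ∀ x, Qθ θ x = (Q x).withDensity fun y =>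
      ENNReal.ofReal (Real.exp (vθ θ y + (α₀ - (-(1 / (θ * (1 - β₀))))) * u x y
        - vθ θ x / β₀))) :
    ∀ θ > (0 : ℝ),
      -- (i) existence: v₀ − vθ solves the recursion under Q_θ with parameter α(θ)
      ((∀ x, v₀ x - vθ θ x = β₀ * Real.log
        (∫ y, Real.exp ((v₀ y - vθ θ y) + (-(1 / (θ * (1 - β₀)))) * u x y) ∂(Qθ θ x))) ∧
      -- (i) uniqueness in the Orlicz heart
      (∀ w : X → ℝ, InHeart Q₀ r w →
        (∀ x, Integrable (fun y => Real.exp (w y + (-(1 / (θ * (1 - β₀)))) * u x y))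
          (Qθ θ x)) →
        (∀ x, w x = β₀ * Real.log
          (∫ y, Real.exp (w y + (-(1 / (θ * (1 - β₀)))) * u x y) ∂(Qθ θ x))) →
        w = fun x => v₀ x - vθ θ x) ∧
      -- (ii) identical worst-case change of measure relative to Q
      (∀ x y, Real.exp ((v₀ y - vθ θ y) + (-(1 / (θ * (1 - β₀)))) * u x y
          - (v₀ x - vθ θ x) / β₀) *
        Real.exp (vθ θ y + (α₀ - (-(1 / (θ * (1 - β₀))))) * u x y - vθ θ x / β₀) =
        Real.exp (v₀ y + α₀ * u x y - v₀ x / β₀))) := by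
  intro θ hθ
  have hβ₀ne : β₀ ≠ 0 := hβ₀.1.ne'
  set αθ : ℝ := -(1 / (θ * (1 - β₀))) with hαθ
  have hvθm : Measurable (vθ θ) := (hvθheart θ hθ).1
  have hv₀m : Measurable v₀ := hv₀heart.1
  have hum : ∀ x, Measurable fun y => u x y := fun x =>
    hu.comp (measurable_const.prodMk measurable_id)
  have hQθ' := hQθ θ hθ
  -- the density
  set D : X → X → ℝ := fun x y => Real.exp (vθ θ y + (α₀ - αθ) * u x y - vθ θ x / β₀)
    with hD
  have hDmeas : ∀ x, Measurable fun y => D x y := fun x =>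
    Real.measurable_exp.comp ((hvθm.add ((hum x).const_mul _)).sub_const _)
  -- probability measures are nonzero
  have hne : ∀ x, NeZero (Q x) := fun x => ⟨(hQ x).ne_zero⟩
  -- integral transfer
  have hint : ∀ (x : X) (g : X → ℝ), ∫ y, g y ∂(Qθ θ x) =
      ∫ y, D x y * g y ∂(Q x) := by
    intro x g
    have h1 : ∫ y, g y ∂((Q x).withDensity fun y => ENNReal.ofReal (Real.exp
        (vθ θ y + (α₀ - αθ) * u x y - vθ θ x / β₀))) =
        ∫ y, (D x y).toNNReal • g y ∂(Q x) :=
      integral_withDensity_eq_integral_smul (measurable_real_toNNReal.comp (hDmeas x)) g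
    rw [hQθ' x, h1]
    refine integral_congr_ae (Filter.Eventually.of_forall fun y => ?_)
    show (D x y).toNNReal • g y = D x y * g y
    rw [NNReal.smul_def, Real.coe_toNNReal _ (Real.exp_pos _).le, smul_eq_mul]
  -- integrability transfer
  have hintg : ∀ (x : X) (g : X → ℝ), Integrable g (Qθ θ x) ↔
      Integrable (fun y => g y * D x y) (Q x) := by
    intro x g
    have h1 : Integrable g ((Q x).withDensity fun y => ENNReal.ofReal (Real.exp
        (vθ θ y + (α₀ - αθ) * u x y - vθ θ x / β₀))) ↔
        Integrable (fun y => g y * (ENNReal.ofReal (D x y)).toReal) (Q x) :=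
      integrable_withDensity_iff (ENNReal.measurable_ofReal.comp (hDmeas x))
        (Filter.Eventually.of_forall fun y => ENNReal.ofReal_lt_top)
    rw [hQθ' x, h1]
    constructor <;> intro h <;> refine h.congr (Filter.Eventually.of_forall fun y => ?_)
    · show g y * (ENNReal.ofReal (D x y)).toReal = g y * D x y
      rw [ENNReal.toReal_ofReal (Real.exp_pos _).le]
    · show g y * D x y = g y * (ENNReal.ofReal (D x y)).toReal
      rw [ENNReal.toReal_ofReal (Real.exp_pos _).le]
  -- a key pointwise identity
  have hkey : ∀ x y, D x y * Real.exp ((v₀ y - vθ θ y) + αθ * u x y) =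
      Real.exp (-(vθ θ x / β₀)) * Real.exp (v₀ y + α₀ * u x y) := by
    intro x y
    rw [hD]
    dsimp only
    rw [← Real.exp_add, ← Real.exp_add]
    congr 1
    ring
  refine ⟨?_, ?_, ?_⟩
  · -- existence
    intro x
    haveI := hne x
    rw [hint x, integral_congr_ae (Filter.Eventually.of_forall (hkey x)),
      integral_const_mul,
      Real.log_mul (Real.exp_ne_zero _) (integral_exp_pos (hv₀int x)).ne',
      Real.log_exp, mul_add, mul_neg, mul_div_cancel₀ _ hβ₀ne, ← hv₀ x]
    ring
  · -- uniqueness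
    intro w hwheart hwint hwrec
    set w' : X → ℝ := fun x => w x + vθ θ x with hw'
    have hw'heart : InHeart Q₀ r w' :=
      heart_bound hr hwheart (hvθheart θ hθ) (hwheart.1.add hvθm)
        (fun x => abs_add_le _ _)
    have hkeyw : ∀ x y, Real.exp (w y + αθ * u x y) * D x y =
        Real.exp (-(vθ θ x / β₀)) * Real.exp (w' y + α₀ * u x y) := by
      intro x y
      rw [hD, hw']
      dsimp only
      rw [← Real.exp_add, ← Real.exp_add]
      congr 1
      ring
    have hw'int : ∀ x, Integrable (fun y => Real.exp (w' y + α₀ * u x y)) (Q x) := by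
      intro x
      have h2 : Integrable (fun y => Real.exp (-(vθ θ x / β₀)) *
          Real.exp (w' y + α₀ * u x y)) (Q x) :=
        (((hintg x _).1 (hwint x)).congr (Filter.Eventually.of_forall (hkeyw x)))
      have h3 := h2.const_mul (Real.exp (vθ θ x / β₀))
      refine h3.congr (Filter.Eventually.of_forall fun y => ?_)
      show Real.exp (vθ θ x / β₀) * (Real.exp (-(vθ θ x / β₀)) *
          Real.exp (w' y + α₀ * u x y)) = Real.exp (w' y + α₀ * u x y)
      rw [← mul_assoc, ← Real.exp_add]
      simp
    have hw'rec : ∀ x, w' x = β₀ * Real.log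
        (∫ y, Real.exp (w' y + α₀ * u x y) ∂(Q x)) := by
      intro x
      haveI := hne x
      have := hwrec x
      rw [hint x] at this
      rw [integral_congr_ae (Filter.Eventually.of_forall fun y =>
          (mul_comm (D x y) (Real.exp (w y + αθ * u x y))).trans (hkeyw x y)),
        integral_const_mul,
        Real.log_mul (Real.exp_ne_zero _) (integral_exp_pos (hw'int x)).ne',
        Real.log_exp, mul_add, mul_neg, mul_div_cancel₀ _ hβ₀ne] at this
      rw [hw']
      dsimp only
      rw [this]
      ring
    have hfinal := huniq w' hw'heart hw'int hw'rec
    funext x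
    have := congrFun hfinal x
    rw [hw'] at this
    dsimp only at this ⊢
    linarith
  · -- (ii)
    intro x y
    rw [← Real.exp_add]
    congr 1
    ring
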